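/- arXiv:2302.03187 — 5 statements merged into one kernel-verified Lean document; each statement's English description precedes it below -/
import Mathlib

section
/- Define the derivation ∂ on the noncommutative polynomial algebra Q⟨z_k : k≥1⟩ by ∂(z_{k_1}⋯z_{k_d}) = ∑_{a=1}^{d} k_a · z_{k_1}⋯z_{k_a+1}⋯z_{k_d} (extended linearly, with ∂(1)=0). Then ∂ is a derivation with respect to the stuffle product *, i.e., ∂(u * v) = ∂(u) * v + u * ∂(v) for all u, v. -/
/-- The stuffle (harmonic) product on words in letters `z_k`, valued in formal
`ℚ`-linear combinations of words. -/
noncomputable def stuffle : List ℕ → List ℕ → (List ℕ →₀ ℚ)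
  | [], v => Finsupp.single v 1
  | u, [] => Finsupp.single u 1
  | i :: u, j :: v =>
      Finsupp.mapDomain (List.cons i) (stuffle u (j :: v)) +
      Finsupp.mapDomain (List.cons j) (stuffle (i :: u) v) +
      Finsupp.mapDomain (List.cons (i + j)) (stuffle u v)
  termination_by u v => u.length + v.length
  decreasing_by all_goals simp [List.length_cons] <;> omega

/-- Bilinear extension of the stuffle product to formal sums of words. -/
noncomputable def stuffleL (f g : List ℕ →₀ ℚ) : List ℕ →₀ ℚ :=
  f.sum fun u a => g.sum fun v b => (a * b) • stuffle u v

/-- The map `∂` on words: `∂(z_{k₁}⋯z_{k_d}) = ∑_a k_a z_{k₁}⋯z_{k_a+1}⋯z_{k_d}`. -/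
noncomputable def der : List ℕ → (List ℕ →₀ ℚ)
  | [] => 0
  | k :: ks =>
      (k : ℚ) • Finsupp.single ((k + 1) :: ks) 1 +
      Finsupp.mapDomain (List.cons k) (der ks)

/-- Linear extension of `∂` to formal sums of words. -/
noncomputable def derL (f : List ℕ →₀ ℚ) : List ℕ →₀ ℚ :=
  f.sum fun w c => c • der w

/-!
Both sides are `ℚ`-bilinear in `(f, g)`, so it suffices to check the identity on pairs of words,
by induction on their total length. Writing `z_k w` for `k :: w`, the rule
`∂(z_k w) = k z_{k+1} w + z_k ∂w` and the stuffle recursion expand both sides of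
`∂(z_i u * z_j v)` into terms covered by the induction hypotheses, plus the terms in
`z_{i+j+1} (u * v)`: on the left with coefficient `i + j`, on the right with `i` (from `∂ z_i`) and
`j` (from `∂ z_j`). That is, `z_k ↦ k z_{k+1}` is a derivation of the letter product
`z_i ⋄ z_j = z_{i+j}`.
-/

open Finsupp

local notation "𝔥" => List ℕ →₀ ℚ

noncomputable def lcons (k : ℕ) : 𝔥 →ₗ[ℚ] 𝔥 := lmapDomain ℚ ℚ (List.cons k)

lemma lcons_apply (k : ℕ) (f : 𝔥) : lcons k f = mapDomain (List.cons k) f := rfl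

@[simp] lemma lcons_single (k : ℕ) (w : List ℕ) (c : ℚ) :
    lcons k (single w c) = single (k :: w) c :=
  mapDomain_single

noncomputable def lder : 𝔥 →ₗ[ℚ] 𝔥 := linearCombination ℚ der

lemma lder_apply (f : 𝔥) : lder f = derL f := linearCombination_apply ℚ f

@[simp] lemma lder_single (w : List ℕ) : lder (single w 1) = der w := by
  simp [lder]

noncomputable def lstuffle : 𝔥 →ₗ[ℚ] 𝔥 →ₗ[ℚ] 𝔥 :=
  linearCombination ℚ fun u => linearCombination ℚ (stuffle u)

lemma lstuffle_apply (f g : 𝔥) : lstuffle f g = stuffleL f g := by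
  simp only [lstuffle, stuffleL, linearCombination_apply, LinearMap.finsupp_sum_apply,
    LinearMap.smul_apply, Finsupp.smul_sum, smul_smul]

@[simp] lemma lstuffle_single_single (u v : List ℕ) :
    lstuffle (single u 1) (single v 1) = stuffle u v := by
  simp [lstuffle]

lemma lstuffle_nil_left (g : 𝔥) : lstuffle (single [] 1) g = g := by
  suffices lstuffle (single [] 1) = LinearMap.id from LinearMap.congr_fun this g
  ext v
  simp [stuffle]

lemma lstuffle_nil_right (f : 𝔥) : lstuffle f (single [] 1) = f := by
  suffices lstuffle.flip (single [] 1) = LinearMap.id from LinearMap.congr_fun this f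
  ext u
  cases u <;> simp [stuffle]

lemma lstuffle_lcons_lcons (i j : ℕ) (f g : 𝔥) :
    lstuffle (lcons i f) (lcons j g) =
      lcons i (lstuffle f (lcons j g)) + lcons j (lstuffle (lcons i f) g) +
        lcons (i + j) (lstuffle f g) := by
  suffices lstuffle.compl₁₂ (lcons i) (lcons j) =
      (lstuffle.compl₂ (lcons j)).compr₂ (lcons i) +
        (lstuffle.compl₁₂ (lcons i) LinearMap.id).compr₂ (lcons j) +
        lstuffle.compr₂ (lcons (i + j)) from
    LinearMap.congr_fun₂ this f g
  ext u v : 4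
  simp [stuffle, lcons_apply]

lemma der_cons (k : ℕ) (w : List ℕ) :
    der (k :: w) = (k : ℚ) • lcons (k + 1) (single w 1) + lcons k (der w) := by
  rw [der, lcons_single, lcons_apply]

lemma lder_lcons (k : ℕ) (f : 𝔥) :
    lder (lcons k f) = (k : ℚ) • lcons (k + 1) f + lcons k (lder f) := by
  suffices lder ∘ₗ lcons k = (k : ℚ) • lcons (k + 1) + lcons k ∘ₗ lder from
    LinearMap.congr_fun this f
  ext w
  simp [der_cons]

lemma lder_stuffle : ∀ u v : List ℕ,
    lder (stuffle u v) = lstuffle (der u) (single v 1) + lstuffle (single u 1) (der v)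
  | [], v => by simp [der, stuffle, lstuffle_nil_left]
  | i :: u, [] => by simp [der, stuffle, lstuffle_nil_right]
  | i :: u, j :: v => by
    have ih₁ := lder_stuffle u (j :: v)
    have ih₂ := lder_stuffle (i :: u) v
    have ih₃ := lder_stuffle u v
    -- write every word as `lcons` applied to a shorter one
    simp only [← lstuffle_single_single, ← lcons_single, der_cons] at ih₁ ih₂ ih₃ ⊢
    simp only [lstuffle_lcons_lcons, map_add, map_smul, lder_lcons, ih₁, ih₂, ih₃,
      LinearMap.add_apply, LinearMap.smul_apply, Nat.cast_add, add_smul, smul_add,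
      add_right_comm i 1 j, ← add_assoc i j 1]
    abel
  termination_by u v => u.length + v.length

/-- `∂` is a derivation with respect to the stuffle product:
`∂(u * v) = ∂(u) * v + u * ∂(v)`. -/
theorem der_is_stuffle_derivation (f g : List ℕ →₀ ℚ) :
    derL (stuffleL f g) = stuffleL (derL f) g + stuffleL f (derL g) := by
  simp only [← lder_apply, ← lstuffle_apply]
  suffices lstuffle.compr₂ lder = lstuffle ∘ₗ lder + lstuffle.compl₂ lder from
    LinearMap.congr_fun₂ this f g
  ext u v : 4
  simp [lder_stuffle]
end

section
/- For integers m ≥ n ≥ 1, the stuffle product of powers of z_1 satisfies z_1^m * z_1^n = ∑_{l=0}^{n} C(m+n−2l, n−l) · (z_2^l ▿ z_1^{m+n−2l}), where ▿ denotes the index shuffle product (shuffle of the letters z_2 and z_1 as words) and C denotes binomial coefficients. -/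
/-- The index shuffle product `▿` on words:
`z_i u ▿ z_j v = z_i(u ▿ z_j v) + z_j(z_i u ▿ v)`. -/
noncomputable def ishuffle : List ℕ → List ℕ → (List ℕ →₀ ℚ)
  | [], v => Finsupp.single v 1
  | u, [] => Finsupp.single u 1
  | i :: u, j :: v =>
      Finsupp.mapDomain (List.cons i) (ishuffle u (j :: v)) +
      Finsupp.mapDomain (List.cons j) (ishuffle (i :: u) v)
  termination_by u v => u.length + v.length
  decreasing_by all_goals simp [List.length_cons] <;> omega

noncomputable def cz (i : ℕ) : (List ℕ →₀ ℚ) →ₗ[ℚ] (List ℕ →₀ ℚ) :=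
  Finsupp.lmapDomain ℚ ℚ (List.cons i)

lemma cz_apply (i : ℕ) (x : List ℕ →₀ ℚ) :
    cz i x = Finsupp.mapDomain (List.cons i) x := rfl

noncomputable def S (m n : ℕ) : List ℕ →₀ ℚ :=
  stuffle (List.replicate m 1) (List.replicate n 1)

noncomputable def T (l k : ℕ) : List ℕ →₀ ℚ :=
  ishuffle (List.replicate l 2) (List.replicate k 1)

noncomputable def R (m n : ℕ) : List ℕ →₀ ℚ :=
  ∑ l ∈ Finset.range (n + 1),
    (Nat.choose (m + n - 2 * l) (n - l) : ℚ) • T l (m + n - 2 * l)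

lemma S_zero_right (m : ℕ) : S m 0 = Finsupp.single (List.replicate m 1) 1 := by
  cases m <;> simp [S, stuffle]

lemma S_zero_left (n : ℕ) : S 0 n = Finsupp.single (List.replicate n 1) 1 := by
  cases n <;> simp [S, stuffle]

lemma S_rec (m n : ℕ) :
    S (m + 1) (n + 1) = cz 1 (S m (n + 1)) + cz 1 (S (m + 1) n) + cz 2 (S m n) := by
  simp only [S, List.replicate_succ]
  rw [stuffle]
  rfl

lemma T_zero_left (k : ℕ) : T 0 k = Finsupp.single (List.replicate k 1) 1 := by
  cases k <;> simp [T, ishuffle]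

lemma T_zero_succ (k : ℕ) : T 0 (k + 1) = cz 1 (T 0 k) := by
  rw [T_zero_left, T_zero_left, cz_apply, Finsupp.mapDomain_single, List.replicate_succ]

lemma T_succ_zero (l : ℕ) : T (l + 1) 0 = cz 2 (T l 0) := by
  rw [T, List.replicate_succ, List.replicate_zero, ishuffle]
  · rw [cz_apply, T, List.replicate_zero]
    cases l <;> simp [ishuffle, Finsupp.mapDomain_single]
  · simp

lemma T_rec (l k : ℕ) :
    T (l + 1) (k + 1) = cz 2 (T l (k + 1)) + cz 1 (T (l + 1) k) := by
  simp only [T, List.replicate_succ]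
  rw [ishuffle]
  rfl

lemma S_symm : ∀ N a b, a + b ≤ N → S a b = S b a := by
  intro N
  induction N with
  | zero =>
    intro a b h
    obtain rfl : a = 0 := by omega
    obtain rfl : b = 0 := by omega
    rfl
  | succ N ih =>
    intro a b h
    match a, b with
    | 0, b => rw [S_zero_left, S_zero_right]
    | a + 1, 0 => rw [S_zero_left, S_zero_right]
    | a + 1, b + 1 =>
      rw [S_rec, S_rec, ih a (b+1) (by omega), ih (a+1) b (by omega), ih a b (by omega)]
      abel

lemma pascalQ (a b : ℕ) :
    ((a+1).choose (b+1) : ℚ) = a.choose b + a.choose (b+1) := by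
  rw [Nat.choose_succ_succ]; push_cast; ring

lemma doublingQ (k : ℕ) :
    ((2*k+2).choose (k+1) : ℚ) = 2 * ((2*k+1).choose k) := by
  have h1 : (2*k+2).choose (k+1) = (2*k+1).choose k + (2*k+1).choose (k+1) :=
    Nat.choose_succ_succ _ _
  have h2 : (2*k+1).choose (k+1) = (2*k+1).choose k := by
    have := Nat.choose_symm (n := 2*k+1) (k := k+1) (by omega)
    have e : 2*k+1 - (k+1) = k := by omega
    rw [e] at this
    exact this.symm
  rw [h1, h2]; push_cast; ring

lemma key_gt (m' n' : ℕ) (h : n' < m') :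
    cz 1 (R m' (n'+1)) + cz 1 (R (m'+1) n') + cz 2 (R m' n') = R (m'+1) (n'+1) := by
  -- Expand the target.
  have hR : R (m'+1) (n'+1) =
      cz 2 (R m' n')
      + ((∑ i ∈ Finset.range (n'+1),
            (Nat.choose (m'+n'-2*i) (n'-i) : ℚ) • cz 1 (T (i+1) (m'+n'-2*i-1)))
        + (Nat.choose (m'+n'+2) (n'+1) : ℚ) • cz 1 (T 0 (m'+n'+1))) := by
    rw [R, Finset.sum_range_succ']
    have hsum : ∀ i ∈ Finset.range (n'+1),
        (Nat.choose (m'+1+(n'+1)-2*(i+1)) (n'+1-(i+1)) : ℚ) •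
          T (i+1) (m'+1+(n'+1)-2*(i+1))
        = (Nat.choose (m'+n'-2*i) (n'-i) : ℚ) • cz 2 (T i (m'+n'-2*i))
          + (Nat.choose (m'+n'-2*i) (n'-i) : ℚ) • cz 1 (T (i+1) (m'+n'-2*i-1)) := by
      intro i hi
      rw [Finset.mem_range] at hi
      have e1 : m'+1+(n'+1)-2*(i+1) = (m'+n'-2*i-1)+1 := by omega
      have e2 : n'+1-(i+1) = n'-i := by omega
      have e3 : m'+n'-2*i-1+1 = m'+n'-2*i := by omega
      rw [e1, e2, T_rec, e3, smul_add]
    rw [Finset.sum_congr rfl hsum, Finset.sum_add_distrib]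
    have e4 : m'+1+(n'+1)-2*0 = (m'+n'+1)+1 := by omega
    have e5 : n'+1-0 = n'+1 := by omega
    rw [e4, e5, T_zero_succ]
    have hc2 : cz 2 (R m' n')
        = ∑ i ∈ Finset.range (n'+1),
            (Nat.choose (m'+n'-2*i) (n'-i) : ℚ) • cz 2 (T i (m'+n'-2*i)) := by
      rw [R, map_sum]
      exact Finset.sum_congr rfl fun i _ => by rw [map_smul]
    rw [hc2, add_assoc]
  rw [hR]
  -- Now match the `cz 1` parts.
  have hc1 : ∀ m n : ℕ, cz 1 (R m n)
      = ∑ l ∈ Finset.range (n+1),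
          (Nat.choose (m+n-2*l) (n-l) : ℚ) • cz 1 (T l (m+n-2*l)) := by
    intro m n
    rw [R, map_sum]
    exact Finset.sum_congr rfl fun i _ => by rw [map_smul]
  rw [hc1, hc1]
  -- normalize the two c1 sums to a common index form
  have hA : (∑ l ∈ Finset.range (n'+1+1),
        (Nat.choose (m'+(n'+1)-2*l) ((n'+1)-l) : ℚ) • cz 1 (T l (m'+(n'+1)-2*l)))
      = (∑ l ∈ Finset.range (n'+1),
        (Nat.choose (m'+n'+1-2*l) (n'+1-l) : ℚ) • cz 1 (T l (m'+n'+1-2*l)))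
        + (1 : ℚ) • cz 1 (T (n'+1) (m'-n'-1)) := by
    rw [Finset.sum_range_succ]
    have hs : ∀ i ∈ Finset.range (n'+1),
        (Nat.choose (m'+(n'+1)-2*i) ((n'+1)-i) : ℚ) • cz 1 (T i (m'+(n'+1)-2*i))
        = (Nat.choose (m'+n'+1-2*i) (n'+1-i) : ℚ) • cz 1 (T i (m'+n'+1-2*i)) := by
      intro i _
      have e : m'+(n'+1)-2*i = m'+n'+1-2*i := by omega
      rw [e]
    rw [Finset.sum_congr rfl hs]
    have e1 : m'+(n'+1)-2*(n'+1) = m'-n'-1 := by omega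
    have e2 : (n'+1)-(n'+1) = 0 := by omega
    rw [e1, e2, Nat.choose_zero_right, Nat.cast_one]
  have hB : (∑ l ∈ Finset.range (n'+1),
        (Nat.choose (m'+1+n'-2*l) (n'-l) : ℚ) • cz 1 (T l (m'+1+n'-2*l)))
      = (∑ l ∈ Finset.range (n'+1),
        (Nat.choose (m'+n'+1-2*l) (n'-l) : ℚ) • cz 1 (T l (m'+n'+1-2*l))) := by
    refine Finset.sum_congr rfl fun i _ => ?_
    have e : m'+1+n'-2*i = m'+n'+1-2*i := by omega
    rw [e]
  rw [hA, hB]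
  -- combine via Pascal
  have hcomb : (∑ l ∈ Finset.range (n'+1),
        (Nat.choose (m'+n'+1-2*l) (n'+1-l) : ℚ) • cz 1 (T l (m'+n'+1-2*l)))
      + (∑ l ∈ Finset.range (n'+1),
        (Nat.choose (m'+n'+1-2*l) (n'-l) : ℚ) • cz 1 (T l (m'+n'+1-2*l)))
      = ∑ l ∈ Finset.range (n'+1),
        (Nat.choose (m'+n'+2-2*l) (n'+1-l) : ℚ) • cz 1 (T l (m'+n'+1-2*l)) := by
    rw [← Finset.sum_add_distrib]
    refine Finset.sum_congr rfl fun i hi => ?_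
    rw [Finset.mem_range] at hi
    rw [← add_smul]
    congr 1
    have e1 : m'+n'+1-2*i = (m'+n'-2*i)+1 := by omega
    have e2 : n'+1-i = (n'-i)+1 := by omega
    have e3 : m'+n'+2-2*i = ((m'+n'-2*i)+1)+1 := by omega
    rw [e1, e2, e3, pascalQ, pascalQ, pascalQ]
    ring
  -- and now reindex the combined c1 sum
  have hD : (∑ l ∈ Finset.range (n'+1),
        (Nat.choose (m'+n'+2-2*l) (n'+1-l) : ℚ) • cz 1 (T l (m'+n'+1-2*l)))
      + (1 : ℚ) • cz 1 (T (n'+1) (m'-n'-1))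
      = (∑ i ∈ Finset.range (n'+1),
            (Nat.choose (m'+n'-2*i) (n'-i) : ℚ) • cz 1 (T (i+1) (m'+n'-2*i-1)))
        + (Nat.choose (m'+n'+2) (n'+1) : ℚ) • cz 1 (T 0 (m'+n'+1)) := by
    have : (∑ l ∈ Finset.range (n'+1+1),
        (Nat.choose (m'+n'+2-2*l) (n'+1-l) : ℚ) • cz 1 (T l (m'+n'+1-2*l)))
        = (∑ l ∈ Finset.range (n'+1),
        (Nat.choose (m'+n'+2-2*l) (n'+1-l) : ℚ) • cz 1 (T l (m'+n'+1-2*l)))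
        + (1 : ℚ) • cz 1 (T (n'+1) (m'-n'-1)) := by
      rw [Finset.sum_range_succ]
      congr 1
      have e1 : m'+n'+2-2*(n'+1) = m'-n' := by omega
      have e2 : n'+1-(n'+1) = 0 := by omega
      have e3 : m'+n'+1-2*(n'+1) = m'-n'-1 := by omega
      rw [e1, e2, e3, Nat.choose_zero_right, Nat.cast_one]
    rw [← this, Finset.sum_range_succ']
    congr 1
    refine Finset.sum_congr rfl fun i hi => ?_
    rw [Finset.mem_range] at hi
    have e1 : m'+n'+2-2*(i+1) = m'+n'-2*i := by omega
    have e2 : n'+1-(i+1) = n'-i := by omega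
    have e3 : m'+n'+1-2*(i+1) = m'+n'-2*i-1 := by omega
    rw [e1, e2, e3]
  -- finish
  calc (∑ l ∈ Finset.range (n'+1),
        (Nat.choose (m'+n'+1-2*l) (n'+1-l) : ℚ) • cz 1 (T l (m'+n'+1-2*l)))
        + (1 : ℚ) • cz 1 (T (n'+1) (m'-n'-1))
      + (∑ l ∈ Finset.range (n'+1),
        (Nat.choose (m'+n'+1-2*l) (n'-l) : ℚ) • cz 1 (T l (m'+n'+1-2*l)))
      + cz 2 (R m' n')
      = cz 2 (R m' n')
        + ((∑ l ∈ Finset.range (n'+1),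
            (Nat.choose (m'+n'+2-2*l) (n'+1-l) : ℚ) • cz 1 (T l (m'+n'+1-2*l)))
          + (1 : ℚ) • cz 1 (T (n'+1) (m'-n'-1))) := by
        rw [← hcomb]; abel
    _ = _ := by rw [hD]

lemma key_eq (n' : ℕ) :
    cz 1 (R (n'+1) n') + cz 1 (R (n'+1) n') + cz 2 (R n' n') = R (n'+1) (n'+1) := by
  have hc1 : ∀ m n : ℕ, cz 1 (R m n)
      = ∑ l ∈ Finset.range (n+1),
          (Nat.choose (m+n-2*l) (n-l) : ℚ) • cz 1 (T l (m+n-2*l)) := by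
    intro m n
    rw [R, map_sum]
    exact Finset.sum_congr rfl fun i _ => by rw [map_smul]
  have hc2 : cz 2 (R n' n')
      = (∑ i ∈ Finset.range n',
          (Nat.choose (n'+n'-2*i) (n'-i) : ℚ) • cz 2 (T i (n'+n'-2*i)))
        + cz 2 (T n' 0) := by
    rw [R, map_sum]
    have hs : ∀ i ∈ Finset.range (n'+1),
        cz 2 ((Nat.choose (n'+n'-2*i) (n'-i) : ℚ) • T i (n'+n'-2*i))
        = (Nat.choose (n'+n'-2*i) (n'-i) : ℚ) • cz 2 (T i (n'+n'-2*i)) := by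
      intro i _; rw [map_smul]
    rw [Finset.sum_congr rfl hs, Finset.sum_range_succ]
    congr 1
    have e1 : n'+n'-2*n' = 0 := by omega
    have e2 : n'-n' = 0 := by omega
    rw [e1, e2, Nat.choose_zero_right, Nat.cast_one, one_smul]
  -- expansion of the target
  have hR : R (n'+1) (n'+1) =
      cz 2 (R n' n')
      + ((∑ i ∈ Finset.range n',
            (Nat.choose (n'+n'-2*i) (n'-i) : ℚ) • cz 1 (T (i+1) (n'+n'-2*i-1)))
        + (Nat.choose (n'+n'+2) (n'+1) : ℚ) • cz 1 (T 0 (n'+n'+1))) := by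
    rw [R, Finset.sum_range_succ', Finset.sum_range_succ]
    have hs : ∀ i ∈ Finset.range n',
        (Nat.choose (n'+1+(n'+1)-2*(i+1)) (n'+1-(i+1)) : ℚ) •
          T (i+1) (n'+1+(n'+1)-2*(i+1))
        = (Nat.choose (n'+n'-2*i) (n'-i) : ℚ) • cz 2 (T i (n'+n'-2*i))
          + (Nat.choose (n'+n'-2*i) (n'-i) : ℚ) • cz 1 (T (i+1) (n'+n'-2*i-1)) := by
      intro i hi
      rw [Finset.mem_range] at hi
      have e1 : n'+1+(n'+1)-2*(i+1) = (n'+n'-2*i-1)+1 := by omega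
      have e2 : n'+1-(i+1) = n'-i := by omega
      have e3 : n'+n'-2*i-1+1 = n'+n'-2*i := by omega
      rw [e1, e2, T_rec, e3, smul_add]
    rw [Finset.sum_congr rfl hs, Finset.sum_add_distrib]
    -- the i = n' term
    have e4 : n'+1+(n'+1)-2*(n'+1) = 0 := by omega
    have e5 : n'+1-(n'+1) = 0 := by omega
    rw [e4, e5, Nat.choose_zero_right, Nat.cast_one, one_smul, T_succ_zero]
    -- the l = 0 term
    have e6 : n'+1+(n'+1)-2*0 = (n'+n'+1)+1 := by omega
    have e7 : n'+1-0 = n'+1 := by omega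
    rw [e6, e7, T_zero_succ]
    have e8 : (n'+n'+1)+1 = n'+n'+2 := by omega
    rw [e8, hc2]
    abel
  rw [hR, hc1]
  -- combine the two equal c1 sums using the doubling identity
  have h2X : (∑ l ∈ Finset.range (n'+1),
        (Nat.choose (n'+1+n'-2*l) (n'-l) : ℚ) • cz 1 (T l (n'+1+n'-2*l)))
      + (∑ l ∈ Finset.range (n'+1),
        (Nat.choose (n'+1+n'-2*l) (n'-l) : ℚ) • cz 1 (T l (n'+1+n'-2*l)))
      = ∑ l ∈ Finset.range (n'+1),
        (Nat.choose (n'+n'+2-2*l) (n'+1-l) : ℚ) • cz 1 (T l (n'+1+n'-2*l)) := by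
    rw [← Finset.sum_add_distrib]
    refine Finset.sum_congr rfl fun i hi => ?_
    rw [Finset.mem_range] at hi
    rw [← add_smul]
    congr 1
    have e1 : n'+1+n'-2*i = 2*(n'-i)+1 := by omega
    have e2 : n'+n'+2-2*i = 2*(n'-i)+2 := by omega
    have e3 : n'+1-i = (n'-i)+1 := by omega
    rw [e1, e2, e3, doublingQ]
    ring
  rw [h2X]
  -- reindex the combined sum
  have hY : (∑ l ∈ Finset.range (n'+1),
        (Nat.choose (n'+n'+2-2*l) (n'+1-l) : ℚ) • cz 1 (T l (n'+1+n'-2*l)))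
      = (∑ i ∈ Finset.range n',
            (Nat.choose (n'+n'-2*i) (n'-i) : ℚ) • cz 1 (T (i+1) (n'+n'-2*i-1)))
        + (Nat.choose (n'+n'+2) (n'+1) : ℚ) • cz 1 (T 0 (n'+n'+1)) := by
    rw [Finset.sum_range_succ']
    congr 1
    · refine Finset.sum_congr rfl fun i hi => ?_
      rw [Finset.mem_range] at hi
      have e1 : n'+n'+2-2*(i+1) = n'+n'-2*i := by omega
      have e2 : n'+1-(i+1) = n'-i := by omega
      have e3 : n'+1+n'-2*(i+1) = n'+n'-2*i-1 := by omega
      rw [e1, e2, e3]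
    · have e1 : n'+n'+2-2*0 = n'+n'+2 := by omega
      have e2 : n'+1-0 = n'+1 := by omega
      have e3 : n'+1+n'-2*0 = n'+n'+1 := by omega
      rw [e1, e2, e3]
  rw [hY]
  abel

lemma R_zero (m : ℕ) : R m 0 = Finsupp.single (List.replicate m 1) 1 := by
  rw [R, Finset.sum_range_one]
  have e1 : m+0-2*0 = m := by omega
  have e2 : (0:ℕ)-0 = 0 := by omega
  rw [e1, e2, Nat.choose_zero_right, Nat.cast_one, one_smul, T_zero_left]

lemma chenAux : ∀ N m n, m + n ≤ N → n ≤ m → S m n = R m n := by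
  intro N
  induction N with
  | zero =>
    intro m n h hmn
    obtain rfl : m = 0 := by omega
    obtain rfl : n = 0 := by omega
    rw [S_zero_right, R_zero]
  | succ N ih =>
    intro m n hN hmn
    match m, n with
    | m, 0 => rw [S_zero_right, R_zero]
    | 0, n+1 => omega
    | m'+1, n'+1 =>
      rw [S_rec]
      rcases Nat.lt_or_ge n' m' with hlt | hge
      · rw [ih m' (n'+1) (by omega) (by omega), ih (m'+1) n' (by omega) (by omega),
            ih m' n' (by omega) (by omega)]
        exact key_gt m' n' hlt
      · obtain rfl : n' = m' := by omega
        rw [S_symm N n' (n'+1) (by omega), ih (n'+1) n' (by omega) (by omega),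
            ih n' n' (by omega) (by omega)]
        exact key_eq n'


/-- Chen's lemma: for `m ≥ n ≥ 1`,
`z₁^m * z₁^n = ∑_{l=0}^{n} C(m+n−2l, n−l)·(z₂^l ▿ z₁^{m+n−2l})`. -/
theorem chen_stuffle_pow_one (m n : ℕ) (hn : 1 ≤ n) (hmn : n ≤ m) :
    stuffle (List.replicate m 1) (List.replicate n 1) =
      ∑ l ∈ Finset.range (n + 1),
        (Nat.choose (m + n - 2 * l) (n - l) : ℚ) •
          ishuffle (List.replicate l 2) (List.replicate (m + n - 2 * l) 1) := by
  have := chenAux (m + n) m n le_rfl hmn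
  rw [S, R] at this
  exact this
end

section
/- For integers n ≥ 1 and k ≥ 0, in the stuffle algebra one has z_1^{n+k} * z_1^n − z_1^{n+k+1} * z_1^{n−1} = ∑_{l=0}^{n} ((k+1)/(l+k+1)) · C(2l+k, l) · (z_2^{n−l} ▿ z_1^{2l+k}), where the coefficient (k+1)/(l+k+1)·C(2l+k,l) equals C(2l+k,l) − C(2l+k,l−1) (a ballot number) and is a nonnegative integer. -/
/-!
Chen's formula `z₁^(n+d) * z₁^n = ∑_l C(2l+d, l) (z₂^(n-l) ▿ z₁^(2l+d))` holds because both sides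
obey the stuffle recursion `z₁u * z₁v = z₁(u * z₁v) + z₁(z₁u * v) + z₂(u * v)`: on the right this
comes from the index-shuffle recursion together with Pascal's rule, and on the diagonal `d = 0`
also from the commutativity of `*`. Subtracting Chen's formula for `(n - 1, k + 2)` from the one
for `(n, k)` leaves the coefficients `C(2l+k, l) - C(2l+k, l-1) = (k+1)/(l+k+1) · C(2l+k, l)`.
-/

open Finset

namespace Stuffle

noncomputable def prepend (a : ℕ) : (List ℕ →₀ ℚ) →ₗ[ℚ] List ℕ →₀ ℚ :=
  Finsupp.lmapDomain ℚ ℚ (List.cons a)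

lemma prepend_single (a : ℕ) (w : List ℕ) (r : ℚ) :
    prepend a (Finsupp.single w r) = Finsupp.single (a :: w) r :=
  Finsupp.mapDomain_single

lemma stuffle_nil_left (v : List ℕ) : stuffle [] v = Finsupp.single v 1 := by
  rw [stuffle]

lemma stuffle_nil_right (u : List ℕ) : stuffle u [] = Finsupp.single u 1 := by
  cases u <;> simp [stuffle]

lemma stuffle_cons_cons (i j : ℕ) (u v : List ℕ) :
    stuffle (i :: u) (j :: v) = prepend i (stuffle u (j :: v)) +
      prepend j (stuffle (i :: u) v) + prepend (i + j) (stuffle u v) := by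
  rw [stuffle]; rfl

lemma ishuffle_nil_left (v : List ℕ) : ishuffle [] v = Finsupp.single v 1 := by
  rw [ishuffle]

lemma ishuffle_nil_right (u : List ℕ) : ishuffle u [] = Finsupp.single u 1 := by
  cases u <;> simp [ishuffle]

lemma ishuffle_cons_cons (i j : ℕ) (u v : List ℕ) :
    ishuffle (i :: u) (j :: v) = prepend i (ishuffle u (j :: v)) +
      prepend j (ishuffle (i :: u) v) := by
  rw [ishuffle]; rfl

theorem stuffle_comm (u v : List ℕ) : stuffle u v = stuffle v u := by
  match u, v with
  | [], _ => rw [stuffle_nil_left, stuffle_nil_right]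
  | _ :: _, [] => rw [stuffle_nil_left, stuffle_nil_right]
  | i :: u, j :: v =>
    rw [stuffle_cons_cons, stuffle_cons_cons, stuffle_comm u (j :: v), stuffle_comm (i :: u) v,
      stuffle_comm u v, Nat.add_comm i j]
    abel
termination_by u.length + v.length

noncomputable def stufflePow (m n : ℕ) : List ℕ →₀ ℚ :=
  stuffle (List.replicate m 1) (List.replicate n 1)

noncomputable def ishufflePow (a b : ℕ) : List ℕ →₀ ℚ :=
  ishuffle (List.replicate a 2) (List.replicate b 1)

lemma stufflePow_comm (m n : ℕ) : stufflePow m n = stufflePow n m :=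
  stuffle_comm _ _

lemma stufflePow_zero_right (m : ℕ) :
    stufflePow m 0 = Finsupp.single (List.replicate m 1) 1 :=
  stuffle_nil_right _

lemma stufflePow_succ_succ (m n : ℕ) : stufflePow (m + 1) (n + 1) =
    prepend 1 (stufflePow m (n + 1)) + prepend 1 (stufflePow (m + 1) n) +
      prepend 2 (stufflePow m n) :=
  stuffle_cons_cons 1 1 _ _

lemma ishufflePow_zero_left (b : ℕ) :
    ishufflePow 0 b = Finsupp.single (List.replicate b 1) 1 :=
  ishuffle_nil_left _

lemma ishufflePow_zero_succ (b : ℕ) : ishufflePow 0 (b + 1) = prepend 1 (ishufflePow 0 b) := by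
  rw [ishufflePow_zero_left, ishufflePow_zero_left, prepend_single, List.replicate_succ]

lemma ishufflePow_succ_zero (a : ℕ) : ishufflePow (a + 1) 0 = prepend 2 (ishufflePow a 0) := by
  rw [ishufflePow, ishufflePow, List.replicate_zero, ishuffle_nil_right, ishuffle_nil_right,
    prepend_single, List.replicate_succ]

lemma ishufflePow_succ_succ (a b : ℕ) : ishufflePow (a + 1) (b + 1) =
    prepend 2 (ishufflePow a (b + 1)) + prepend 1 (ishufflePow (a + 1) b) :=
  ishuffle_cons_cons 2 1 _ _

noncomputable def ishuffleSum (c : ℕ → ℚ) (n d : ℕ) : List ℕ →₀ ℚ :=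
  ∑ p ∈ antidiagonal n, c p.1 • ishufflePow p.2 (2 * p.1 + d)

lemma ishuffleSum_zero (c : ℕ → ℚ) (d : ℕ) : ishuffleSum c 0 d = c 0 • ishufflePow 0 d := by
  simp [ishuffleSum]

lemma ishuffleSum_add (c c' : ℕ → ℚ) (n d : ℕ) :
    ishuffleSum (c + c') n d = ishuffleSum c n d + ishuffleSum c' n d := by
  simp only [ishuffleSum, Pi.add_apply, add_smul, sum_add_distrib]

lemma ishuffleSum_succ (c : ℕ → ℚ) (n d : ℕ) :
    ishuffleSum c (n + 1) d =
      c 0 • ishufflePow (n + 1) d + ishuffleSum (c ∘ (· + 1)) n (d + 2) := by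
  rw [ishuffleSum, Nat.sum_antidiagonal_succ]
  congr 1
  · simp
  · refine sum_congr rfl fun p _ => ?_
    simp only [Function.comp_apply]
    ring_nf

lemma ishuffleSum_succ_succ (c : ℕ → ℚ) (n d : ℕ) :
    ishuffleSum c (n + 1) (d + 1) =
      prepend 2 (ishuffleSum c n (d + 1)) + prepend 1 (ishuffleSum c (n + 1) d) := by
  simp only [ishuffleSum, Nat.sum_antidiagonal_succ', ← add_assoc, ishufflePow_zero_succ,
    ishufflePow_succ_succ, smul_add, sum_add_distrib, map_add, map_sum, map_smul]
  abel

noncomputable def chenCoeff (d l : ℕ) : ℚ := (2 * l + d).choose l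

noncomputable def ballot (k l : ℕ) : ℚ := (k + 1) / (l + k + 1) * chenCoeff k l

@[simp]
lemma chenCoeff_zero_right (d : ℕ) : chenCoeff d 0 = 1 := by
  simp [chenCoeff]

@[simp]
lemma ballot_zero_right (k : ℕ) : ballot k 0 = 1 := by
  have hk : (k : ℚ) + 1 ≠ 0 := by positivity
  simp [ballot, hk]

lemma chenCoeff_succ_succ (d l : ℕ) :
    chenCoeff (d + 1) (l + 1) = chenCoeff d (l + 1) + chenCoeff (d + 2) l := by
  rw [chenCoeff, chenCoeff, chenCoeff, show 2 * (l + 1) + (d + 1) = 2 * l + (d + 2) + 1 by ring,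
    Nat.choose_succ_succ', show 2 * (l + 1) + d = 2 * l + (d + 2) by ring, Nat.cast_add, add_comm]

lemma chenCoeff_zero_succ (l : ℕ) : chenCoeff 0 (l + 1) = chenCoeff 1 l + chenCoeff 1 l := by
  rw [chenCoeff, chenCoeff, show 2 * (l + 1) + 0 = 2 * l + 1 + 1 by ring, Nat.choose_succ_succ',
    Nat.choose_symm_half, Nat.cast_add]

lemma chenCoeff_succ_eq_ballot_add (k l : ℕ) :
    chenCoeff k (l + 1) = ballot k (l + 1) + chenCoeff (k + 2) l := by
  have h := Nat.choose_succ_right_eq (2 * l + k + 2) l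
  rw [show 2 * l + k + 2 - l = l + k + 2 by omega] at h
  have hq : ((2 * l + k + 2).choose (l + 1) : ℚ) * (l + 1) =
      (2 * l + k + 2).choose l * (l + k + 2) := by exact_mod_cast h
  rw [ballot, chenCoeff, chenCoeff, show 2 * (l + 1) + k = 2 * l + k + 2 by ring,
    show 2 * l + (k + 2) = 2 * l + k + 2 by ring, Nat.cast_succ, div_mul_eq_mul_div,
    ← sub_eq_iff_eq_add, eq_div_iff (by positivity)]
  linear_combination hq

noncomputable def chenSum (n d : ℕ) : List ℕ →₀ ℚ :=
  ishuffleSum (chenCoeff d) n d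

lemma chenSum_zero (d : ℕ) : chenSum 0 d = ishufflePow 0 d := by
  simp [chenSum, ishuffleSum_zero]

lemma ishuffleSum_chenCoeff_succ (n d : ℕ) :
    ishuffleSum (chenCoeff (d + 1)) (n + 1) d = chenSum (n + 1) d + chenSum n (d + 2) := by
  have pascal : chenCoeff (d + 1) ∘ (· + 1) = chenCoeff d ∘ (· + 1) + chenCoeff (d + 2) :=
    funext (chenCoeff_succ_succ d)
  rw [chenSum, chenSum, ishuffleSum_succ, ishuffleSum_succ, pascal, ishuffleSum_add,
    chenCoeff_zero_right, chenCoeff_zero_right]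
  abel

lemma chenSum_succ_succ (n d : ℕ) : chenSum (n + 1) (d + 1) =
    prepend 2 (chenSum n (d + 1)) + prepend 1 (chenSum (n + 1) d) +
      prepend 1 (chenSum n (d + 2)) := by
  rw [chenSum, ishuffleSum_succ_succ, ishuffleSum_chenCoeff_succ, map_add, ← add_assoc]
  rfl

lemma chenSum_succ_zero_eq (n : ℕ) : chenSum (n + 1) 0 =
    ishufflePow (n + 1) 0 + (ishuffleSum (chenCoeff 1) n 2 + ishuffleSum (chenCoeff 1) n 2) := by
  have central : chenCoeff 0 ∘ (· + 1) = chenCoeff 1 + chenCoeff 1 :=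
    funext chenCoeff_zero_succ
  rw [chenSum, ishuffleSum_succ, central, ishuffleSum_add, chenCoeff_zero_right, one_smul]

lemma chenSum_succ_zero (n : ℕ) : chenSum (n + 1) 0 =
    prepend 2 (chenSum n 0) + prepend 1 (chenSum n 1) + prepend 1 (chenSum n 1) := by
  cases n with
  | zero =>
    rw [chenSum_succ_zero_eq, ishuffleSum_zero, chenSum_zero, chenSum_zero,
      ishufflePow_succ_zero, ishufflePow_zero_succ, chenCoeff_zero_right, one_smul]
    abel
  | succ m =>
    rw [chenSum_succ_zero_eq, chenSum_succ_zero_eq, ishuffleSum_succ_succ, ishufflePow_succ_zero]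
    simp only [map_add]
    abel

theorem stufflePow_add_self (n d : ℕ) : stufflePow (n + d) n = chenSum n d := by
  induction n generalizing d with
  | zero => rw [zero_add, stufflePow_zero_right, chenSum_zero, ishufflePow_zero_left]
  | succ n ih =>
    induction d with
    | zero =>
      have h1 : stufflePow n (n + 1) = chenSum n 1 := by rw [stufflePow_comm]; exact ih 1
      have h0 : stufflePow n n = chenSum n 0 := ih 0
      rw [add_zero, stufflePow_succ_succ, stufflePow_comm (n + 1) n, h1, h0, chenSum_succ_zero]
      abel
    | succ e ihe =>
      have h1 : stufflePow (n + (e + 1)) (n + 1) = chenSum (n + 1) e := by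
        rw [← ihe, add_right_comm, add_assoc]
      have h2 : stufflePow (n + (e + 1) + 1) n = chenSum n (e + 2) := ih (e + 2)
      rw [show n + 1 + (e + 1) = n + (e + 1) + 1 by ring, stufflePow_succ_succ, h1, h2, ih,
        chenSum_succ_succ]
      abel

lemma chenSum_succ_eq_ballot_add (n k : ℕ) :
    chenSum (n + 1) k = ishuffleSum (ballot k) (n + 1) k + chenSum n (k + 2) := by
  have ballot_split : chenCoeff k ∘ (· + 1) = ballot k ∘ (· + 1) + chenCoeff (k + 2) :=
    funext (chenCoeff_succ_eq_ballot_add k)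
  rw [chenSum, ishuffleSum_succ, ishuffleSum_succ, ballot_split, ishuffleSum_add,
    chenCoeff_zero_right, ballot_zero_right]
  abel

end Stuffle

open Stuffle in
/-- For `n ≥ 1`, `k ≥ 0`:
`z₁^{n+k} * z₁^n − z₁^{n+k+1} * z₁^{n−1}
  = ∑_{l=0}^{n} ((k+1)/(l+k+1))·C(2l+k, l)·(z₂^{n−l} ▿ z₁^{2l+k})`,
where the coefficient `(k+1)/(l+k+1)·C(2l+k,l)` is a ballot number. -/
theorem stuffle_difference_ballot (n k : ℕ) (hn : 1 ≤ n) :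
    stuffle (List.replicate (n + k) 1) (List.replicate n 1)
      - stuffle (List.replicate (n + k + 1) 1) (List.replicate (n - 1) 1) =
    ∑ l ∈ Finset.range (n + 1),
      ((((k : ℚ) + 1) / ((l : ℚ) + (k : ℚ) + 1)) * (Nat.choose (2 * l + k) l : ℚ)) •
        ishuffle (List.replicate (n - l) 2) (List.replicate (2 * l + k) 1) := by
  obtain ⟨m, rfl⟩ : ∃ m, n = m + 1 := ⟨n - 1, by omega⟩
  rw [show m + 1 + k + 1 = m + (k + 2) by ring, Nat.add_sub_cancel]
  change stufflePow (m + 1 + k) (m + 1) - stufflePow (m + (k + 2)) m = _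
  rw [stufflePow_add_self, stufflePow_add_self, chenSum_succ_eq_ballot_add, add_sub_cancel_right]
  exact Nat.sum_antidiagonal_eq_sum_range_succ
    (fun l i => ballot k l • ishufflePow i (2 * l + k)) _
end

section
/- For any index k = (k_1,…,k_d) of positive integers and any integer l ≥ 0, the identity Q_l(k) = ∑_{j=0}^{k_d − 1} (−1)^j P_{l+j}(k_1,…,k_{d−1}, k_d − j) holds, where P and Q are defined as weighted sums of multiple zeta values below. In particular Q_l(k) = P_l(k) when k_d = 1. -/
open Classical in
/-- Multiple zeta value with strict lower bound `m`:
`∑_{m<m₁<⋯<m_d} ∏ 1/mᵢ^{kᵢ}` (interpreted as a `tsum`). -/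
noncomputable def mzvFrom : List ℕ → ℕ → ℝ
  | [], _ => 1
  | k :: ks, m => ∑' n : {n : ℕ // m < n}, (1 / ((n : ℕ) : ℝ) ^ k) * mzvFrom ks (n : ℕ)

/-- The multiple zeta value `ζ(k₁,…,k_d) = ∑_{0<m₁<⋯<m_d} ∏ 1/mᵢ^{kᵢ}`. -/
noncomputable def mzv (ks : List ℕ) : ℝ := mzvFrom ks 0

open Classical in
/-- The weighted sum `P_l(n;k) = ∑_{w admissible, wᵢ ≥ nᵢ, wt(w)=wt(k)+l}
∏ C(wᵢ−nᵢ, kᵢ−1) · ζ(w₁,…,w_d)`. -/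
noncomputable def Psum (l : ℕ) {d : ℕ} (n k : Fin (d + 1) → ℕ) : ℝ :=
  ∑ w : Fin (d + 1) → Fin ((∑ i, k i) + l + 1),
    if (∀ i, n i ≤ (w i : ℕ)) ∧ 2 ≤ (w (Fin.last d) : ℕ) ∧
        (∑ i, (w i : ℕ)) = (∑ i, k i) + l then
      (∏ i, (Nat.choose ((w i : ℕ) - n i) (k i - 1) : ℝ)) *
        mzv (List.ofFn fun i => (w i : ℕ))
    else 0

/-- `P_l(k) = P_l((1,…,1); k)`. -/
noncomputable def Pl (l : ℕ) {d : ℕ} (k : Fin (d + 1) → ℕ) : ℝ :=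
  Psum l (fun _ => 1) k

/-- `Q_l(k) = P_l((1,…,1,2); k)`. -/
noncomputable def Ql (l : ℕ) {d : ℕ} (k : Fin (d + 1) → ℕ) : ℝ :=
  Psum l (Function.update (fun _ => (1 : ℕ)) (Fin.last d) 2) k


lemma binom_alt (m K : ℕ) :
    ∑ j ∈ Finset.range (K + 1), (-1 : ℝ) ^ j * (Nat.choose (m + 1) (K - j) : ℝ)
      = (Nat.choose m K : ℝ) := by
  induction K with
  | zero => simp
  | succ K ih =>
    rw [Finset.sum_range_succ']
    have h2 : ∀ j ∈ Finset.range (K + 1),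
        (-1 : ℝ) ^ (j + 1) * (Nat.choose (m + 1) (K + 1 - (j + 1)) : ℝ)
          = -((-1 : ℝ) ^ j * (Nat.choose (m + 1) (K - j) : ℝ)) := by
      intro j hj
      rw [Nat.succ_sub_succ, pow_succ]
      ring
    rw [Finset.sum_congr rfl h2]
    rw [Finset.sum_neg_distrib]
    rw [ih]
    have h3 : (Nat.choose (m + 1) (K + 1) : ℝ)
        = (Nat.choose m K : ℝ) + (Nat.choose m (K + 1) : ℝ) := by
      exact_mod_cast congrArg Nat.cast (Nat.choose_succ_succ m K)
    simp only [Nat.sub_zero, pow_zero, one_mul]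
    rw [h3]; ring

open Classical in
lemma Psum_eq_PsumN (l : ℕ) {d : ℕ} (n k : Fin (d + 1) → ℕ) (N : ℕ)
    (h : (∑ i, k i) + l = N) :
    Psum l n k = ∑ w : Fin (d + 1) → Fin (N + 1),
      if (∀ i, n i ≤ (w i : ℕ)) ∧ 2 ≤ (w (Fin.last d) : ℕ) ∧ (∑ i, (w i : ℕ)) = N then
        (∏ i, (Nat.choose ((w i : ℕ) - n i) (k i - 1) : ℝ)) *
          mzv (List.ofFn fun i => (w i : ℕ))
      else 0 := by
  subst h; rfl

/-- For any index `k = (k₁,…,k_d)` of positive integers and `l ≥ 0`: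
`Q_l(k) = ∑_{j=0}^{k_d−1} (−1)^j P_{l+j}(k₁,…,k_{d−1}, k_d−j)`;
in particular `Q_l(k) = P_l(k)` when `k_d = 1`. -/
theorem Ql_eq_alternating_Pl (l d : ℕ) (k : Fin (d + 1) → ℕ) (hk : ∀ i, 1 ≤ k i) :
    Ql l k = ∑ j ∈ Finset.range (k (Fin.last d)),
        (-1 : ℝ) ^ j * Pl (l + j) (Function.update k (Fin.last d) (k (Fin.last d) - j)) ∧
    (k (Fin.last d) = 1 → Ql l k = Pl l k) := by
  have hne : ∀ i : Fin d, (i.castSucc : Fin (d + 1)) ≠ Fin.last d :=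
    fun i => (Fin.castSucc_lt_last i).ne
  have upd1 : ∀ (b : ℕ) (f : Fin (d + 1) → ℕ) (i : Fin d),
      Function.update f (Fin.last d) b i.castSucc = f i.castSucc :=
    fun b f i => Function.update_of_ne (hne i) _ _
  set S : ℕ := (∑ i, k i) + l with hS
  have hsum : ∀ j, j < k (Fin.last d) →
      (∑ i, Function.update k (Fin.last d) (k (Fin.last d) - j) i) + (l + j) = S := by
    intro j hj
    have h1 : ∑ i, Function.update k (Fin.last d) (k (Fin.last d) - j) i
        = (k (Fin.last d) - j) + ∑ i ∈ Finset.univ \ {Fin.last d}, k i :=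
      Finset.sum_update_of_mem (Finset.mem_univ _) _ _
    have h2 : ∑ i, k i = (∑ i ∈ Finset.univ \ {Fin.last d}, k i) + k (Fin.last d) :=
      Finset.sum_eq_sum_sdiff_singleton_add (Finset.mem_univ _) _
    omega
  have key : Ql l k = ∑ j ∈ Finset.range (k (Fin.last d)),
      (-1 : ℝ) ^ j * Pl (l + j) (Function.update k (Fin.last d) (k (Fin.last d) - j)) := by
    unfold Ql
    rw [Psum_eq_PsumN _ _ _ S hS.symm]
    have hP : ∀ j ∈ Finset.range (k (Fin.last d)),
        (-1 : ℝ) ^ j * Pl (l + j) (Function.update k (Fin.last d) (k (Fin.last d) - j))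
          = ∑ w : Fin (d + 1) → Fin (S + 1),
              (-1 : ℝ) ^ j *
              (if (∀ i, (fun _ => (1 : ℕ)) i ≤ (w i : ℕ)) ∧ 2 ≤ (w (Fin.last d) : ℕ) ∧
                  (∑ i, (w i : ℕ)) = S then
                (∏ i, (Nat.choose ((w i : ℕ) - 1)
                    (Function.update k (Fin.last d) (k (Fin.last d) - j) i - 1) : ℝ)) *
                  mzv (List.ofFn fun i => (w i : ℕ))
              else 0) := by
      intro j hj
      rw [Finset.mem_range] at hj
      unfold Pl
      rw [Psum_eq_PsumN _ _ _ S (hsum j hj), Finset.mul_sum]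
    rw [Finset.sum_congr rfl hP, Finset.sum_comm]
    refine Finset.sum_congr rfl fun w _ => ?_
    by_cases hC : (∀ i, (fun _ => (1 : ℕ)) i ≤ (w i : ℕ)) ∧ 2 ≤ (w (Fin.last d) : ℕ) ∧
        (∑ i, (w i : ℕ)) = S
    · have hCQ : (∀ i, Function.update (fun _ => (1 : ℕ)) (Fin.last d) 2 i ≤ (w i : ℕ)) ∧
          2 ≤ (w (Fin.last d) : ℕ) ∧ (∑ i, (w i : ℕ)) = S := by
        refine ⟨fun i => ?_, hC.2.1, hC.2.2⟩
        rcases eq_or_ne i (Fin.last d) with h | h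
        · subst h; simpa using hC.2.1
        · rw [Function.update_of_ne h]; exact hC.1 i
      rw [if_pos hCQ]
      rw [Finset.sum_congr rfl (fun j _ => by rw [if_pos hC])]
      obtain ⟨m, hm⟩ : ∃ m, (w (Fin.last d) : ℕ) = m + 2 :=
        ⟨(w (Fin.last d) : ℕ) - 2, by have := hC.2.1; omega⟩
      obtain ⟨K, hKK⟩ : ∃ K, k (Fin.last d) = K + 1 :=
        ⟨k (Fin.last d) - 1, by have := hk (Fin.last d); omega⟩
      have e0 : K + 1 - 1 = K := by omega
      have e1 : m + 2 - 1 = m + 1 := by omega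
      have e2 : m + 2 - 2 = m := by omega
      have e3 : ∀ j : ℕ, K + 1 - j - 1 = K - j := fun j => by omega
      simp only [Fin.prod_univ_castSucc, upd1, Function.update_self, hm, hKK, e0, e1, e2, e3]
      rw [← binom_alt m K, Finset.mul_sum, Finset.sum_mul]
      exact Finset.sum_congr rfl fun j _ => by ring
    · have hCQ : ¬ ((∀ i, Function.update (fun _ => (1 : ℕ)) (Fin.last d) 2 i ≤ (w i : ℕ)) ∧
          2 ≤ (w (Fin.last d) : ℕ) ∧ (∑ i, (w i : ℕ)) = S) := by
        intro h
        refine hC ⟨fun i => ?_, h.2.1, h.2.2⟩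
        refine le_trans ?_ (h.1 i)
        rcases eq_or_ne i (Fin.last d) with h' | h'
        · subst h'; simp
        · rw [Function.update_of_ne h']
      rw [if_neg hCQ]
      symm
      apply Finset.sum_eq_zero
      intro j _
      rw [if_neg hC, mul_zero]
  refine ⟨key, fun h1 => ?_⟩
  rw [key, h1]
  have hup : Function.update k (Fin.last d) 1 = k := by
    funext i
    rcases eq_or_ne i (Fin.last d) with h | h
    · subst h; simp [h1]
    · rw [Function.update_of_ne h]
  simp [hup]
end

section
/- For a word v = z_{k_1}⋯z_{k_d} with k_1+⋯+k_d = k, and the weighted sum Q_l as defined below, one has (l−1)·Q_l(v) = Q_{l−1}(∂(v)) for every l ≥ 1, where ∂(z_{k_1}⋯z_{k_d}) = ∑_a k_a z_{k_1}⋯z_{k_a+1}⋯z_{k_d}. -/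
/-!
Since `k · C(m, k) = (m - k + 1) · C(m, k - 1)`, letting `∂` act on the lower indices of
`∏ᵢ C(wᵢ - nᵢ, kᵢ - 1)` multiplies it by `∑ᵢ (wᵢ - nᵢ - kᵢ + 1) = l + d + 1 - ∑ᵢ nᵢ` whenever
`∑ᵢ wᵢ = ∑ᵢ kᵢ + l`. As `∂` raises the weight of `k` by one, both sides of the identity run over the
same indices `w`, so it holds term by term; for `Q_l`, `n = (1, …, 1, 2)` and the factor is `l - 1`.
-/

open Finset Function

lemma succ_mul_choose_succ_eq_sub_mul {R : Type*} [CommRing R] (m j : ℕ) :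
    ((j : R) + 1) * m.choose (j + 1) = ((m : R) - j) * m.choose j := by
  rcases le_or_gt j m with hjm | hmj
  · have h : ((m.choose (j + 1) * (j + 1) : ℕ) : R) = ((m.choose j * (m - j) : ℕ) : R) :=
      congrArg _ (Nat.choose_succ_right_eq m j)
    push_cast [Nat.cast_sub hjm] at h
    linear_combination h
  · simp [Nat.choose_eq_zero_of_lt hmj, Nat.choose_eq_zero_of_lt (hmj.trans j.lt_succ_self)]

lemma sum_mul_prod_choose_update {ι R : Type*} [Fintype ι] [DecidableEq ι] [CommRing R]
    (m k : ι → ℕ) (hk : ∀ i, 1 ≤ k i) :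
    ∑ a, (k a : R) * ∏ i, ((m i).choose (update k a (k a + 1) i - 1) : R) =
      (∑ a, ((m a : R) - k a + 1)) * ∏ i, ((m i).choose (k i - 1) : R) := by
  rw [sum_mul]
  refine sum_congr rfl fun a _ => ?_
  have hupdate : (fun i => ((m i).choose (update k a (k a + 1) i - 1) : R)) =
      update (fun i => ((m i).choose (k i - 1) : R)) a ((m a).choose (k a)) := by
    funext i
    rw [apply_update (fun i v => ((m i).choose (v - 1) : R)), Nat.add_sub_cancel]
  have hchoose := succ_mul_choose_succ_eq_sub_mul (R := R) (m a) (k a - 1)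
  rw [Nat.sub_add_cancel (hk a), Nat.cast_sub (hk a)] at hchoose
  push_cast at hchoose
  rw [sub_add_cancel] at hchoose
  rw [hupdate, prod_update_of_mem (mem_univ a), ← mul_prod_erase _ _ (mem_univ a),
    sdiff_singleton_eq_erase, ← mul_assoc, ← mul_assoc, hchoose]
  ring

-- The summand of `Psum`, with the total weight `S` decoupled from `k`.
open Classical in
noncomputable def psumTerm {d : ℕ} (S : ℕ) (n k w : Fin (d + 1) → ℕ) : ℝ :=
  if (∀ i, n i ≤ w i) ∧ 2 ≤ w (Fin.last d) ∧ ∑ i, w i = S then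
    (∏ i, ((w i - n i).choose (k i - 1) : ℝ)) * mzv (List.ofFn w)
  else 0

lemma Psum_eq_sum_psumTerm (l : ℕ) {d : ℕ} (n k : Fin (d + 1) → ℕ) (S : ℕ)
    (hS : ∑ i, k i + l = S) :
    Psum l n k = ∑ w : Fin (d + 1) → Fin (S + 1), psumTerm S n k fun i => w i := by
  subst hS
  rfl

lemma psumTerm_der_identity (l : ℕ) {d : ℕ} (n k w : Fin (d + 1) → ℕ) (hk : ∀ i, 1 ≤ k i)
    (S : ℕ) (hS : ∑ i, k i + l = S) :
    ((l + d + 1 : ℝ) - ∑ i, (n i : ℝ)) * psumTerm S n k w =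
      ∑ a, (k a : ℝ) * psumTerm S n (update k a (k a + 1)) w := by
  by_cases hw : (∀ i, n i ≤ w i) ∧ 2 ≤ w (Fin.last d) ∧ ∑ i, w i = S
  · simp only [psumTerm, if_pos hw, ← mul_assoc]
    rw [← sum_mul, sum_mul_prod_choose_update _ k hk]
    have hweight : ∑ i, (w i : ℝ) = ∑ i, (k i : ℝ) + l := by
      exact_mod_cast hw.2.2.trans hS.symm
    have hsum : ∑ a, (((w a - n a : ℕ) : ℝ) - k a + 1) = l + d + 1 - ∑ i, (n i : ℝ) := by
      simp only [Nat.cast_sub (hw.1 _), sum_add_distrib, sum_sub_distrib, hweight, sum_const,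
        card_univ, Fintype.card_fin, nsmul_eq_mul, Nat.cast_add, Nat.cast_one, mul_one]
      ring
    rw [hsum]
  · simp only [psumTerm, if_neg hw, mul_zero, sum_const_zero]

theorem Psum_der_identity (l d : ℕ) (hl : 1 ≤ l) (n k : Fin (d + 1) → ℕ)
    (hk : ∀ i, 1 ≤ k i) :
    ((l + d + 1 : ℝ) - ∑ i, (n i : ℝ)) * Psum l n k =
      ∑ a, (k a : ℝ) * Psum (l - 1) n (update k a (k a + 1)) := by
  have hweight (a : Fin (d + 1)) : ∑ i, update k a (k a + 1) i + (l - 1) = ∑ i, k i + l := by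
    rw [sum_update_of_mem (mem_univ a), ← add_sum_erase _ k (mem_univ a),
      sdiff_singleton_eq_erase]
    omega
  simp only [Psum_eq_sum_psumTerm _ _ _ _ (hweight _), Psum_eq_sum_psumTerm l n k _ rfl,
    mul_sum]
  rw [sum_comm]
  exact sum_congr rfl fun w _ => psumTerm_der_identity l n k _ hk _ rfl

/-- Lemma 4.10 (iii): for `l ≥ 1` and a word `v = z_{k₁}⋯z_{k_d}`,
`(l−1)·Q_l(v) = Q_{l−1}(∂(v))`, where
`∂(z_{k₁}⋯z_{k_d}) = ∑_a k_a z_{k₁}⋯z_{k_a+1}⋯z_{k_d}`. -/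
theorem Ql_der_identity (l d : ℕ) (hl : 1 ≤ l) (k : Fin (d + 1) → ℕ)
    (hk : ∀ i, 1 ≤ k i) :
    ((l : ℝ) - 1) * Ql l k =
      ∑ a : Fin (d + 1), (k a : ℝ) * Ql (l - 1) (Function.update k a (k a + 1)) := by
  have hn : ∑ i, ((update (fun _ => (1 : ℕ)) (Fin.last d) 2 i : ℕ) : ℝ) = d + 2 := by
    rw [← Nat.cast_sum, sum_update_of_mem (mem_univ _)]
    simp only [sdiff_singleton_eq_erase, sum_const, mem_univ, card_erase_of_mem, card_univ,
      Fintype.card_fin, add_tsub_cancel_right, smul_eq_mul, mul_one, Nat.cast_add, Nat.cast_ofNat]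
    ring
  have h := Psum_der_identity l d hl (update (fun _ => 1) (Fin.last d) 2) k hk
  rwa [hn, show (l + d + 1 : ℝ) - (d + 2) = l - 1 by ring] at h
end
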